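/- N(Γ₀(8)) = 6: the set of cosets P·SL₂(ℤ) in SL₂(ℝ)/SL₂(ℤ) such that P⁻¹·A·P has integer entries for every A ∈ Γ₀(8) has exactly 6 elements. -/

import Mathlib

open Matrix MatrixGroups CongruenceSubgroup

/-- A real 2×2 matrix has integer entries. -/
def IsIntegerMatrix (M : Matrix (Fin 2) (Fin 2) ℝ) : Prop :=
  ∀ i j, ∃ k : ℤ, M i j = (k : ℝ)

/-- The embedding `SL(2, ℤ) →* SL(2, ℝ)`. -/
noncomputable def toSL2R : SL(2, ℤ) →* SL(2, ℝ) :=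
  Matrix.SpecialLinearGroup.map (Int.castRingHom ℝ)

/-- `SL(2, ℤ)` as a subgroup of `SL(2, ℝ)`. -/
noncomputable def SL2ZinR : Subgroup SL(2, ℝ) := toSL2R.range

/-- The set of cosets `P·SL₂(ℤ)` in `SL₂(ℝ)/SL₂(ℤ)` such that `P⁻¹·A·P` has integer
entries for every `A ∈ G`; its cardinality is `N(G)`. -/
noncomputable def goodCosets (G : Subgroup SL(2, ℤ)) : Set (SL(2, ℝ) ⧸ SL2ZinR) :=
  {x | ∃ P : SL(2, ℝ), x = QuotientGroup.mk P ∧ ∀ A ∈ G,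
    IsIntegerMatrix ((P⁻¹ * toSL2R A * P : SL(2, ℝ)) : Matrix (Fin 2) (Fin 2) ℝ)}

/-! The condition on `P` is invariant under `P ↦ P γ` for `γ ∈ SL₂(ℤ)`. Conjugating `T` shows that
the pairwise products of the entries of the bottom row `v` of `P` are integers, so `v` is a real
multiple of a primitive integer vector, and a right `SL₂(ℤ)`-move brings `P` to the form
`[[t⁻¹, q], [0, t]]` with `t > 0`. Conjugating `T` and `[[1, 0], [8, 1]]` then forces `t = √e` with
`e ∣ 8` and `q = x √e / 8` with `x ∈ ℤ`, `8 ∣ x² e`; these conditions are also sufficient, because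
`a ≡ d [ZMOD 8]` for every `[[a, b], [c, d]] ∈ Γ₀(8)`. Two such matrices give the same coset iff
`e = e'` and `8 ∣ (x - x') e`, which leaves the six classes
`(e, x) = (1, 0), (1, 4), (2, 0), (2, 2), (4, 0), (8, 0)`. -/

open ModularGroup

lemma det_fin_two_eq_one {R : Type*} [CommRing R] (A : SL(2, R)) :
    A 0 0 * A 1 1 - A 0 1 * A 1 0 = 1 := by
  rw [← det_fin_two]; exact A.2

lemma IsIntegerMatrix.mul {X Y : Matrix (Fin 2) (Fin 2) ℝ} (hX : IsIntegerMatrix X)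
    (hY : IsIntegerMatrix Y) : IsIntegerMatrix (X * Y) := by
  choose x hx using hX
  choose y hy using hY
  exact fun i j => ⟨(Matrix.of x * Matrix.of y) i j, by simp [Matrix.mul_apply, hx, hy]⟩

@[simp]
lemma coe_toSL2R (A : SL(2, ℤ)) :
    (toSL2R A : Matrix (Fin 2) (Fin 2) ℝ) = (A : Matrix (Fin 2) (Fin 2) ℤ).map (↑) :=
  rfl

lemma isIntegerMatrix_toSL2R (A : SL(2, ℤ)) :
    IsIntegerMatrix (toSL2R A : Matrix (Fin 2) (Fin 2) ℝ) :=
  fun i j => ⟨A i j, rfl⟩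

lemma isIntegerMatrix_of_mem_SL2ZinR {X : SL(2, ℝ)} (hX : X ∈ SL2ZinR) :
    IsIntegerMatrix (X : Matrix (Fin 2) (Fin 2) ℝ) := by
  obtain ⟨A, rfl⟩ := hX
  exact isIntegerMatrix_toSL2R A

def IsConjIntegral (G : Subgroup SL(2, ℤ)) (P : SL(2, ℝ)) : Prop :=
  ∀ A ∈ G, IsIntegerMatrix ((P⁻¹ * toSL2R A * P : SL(2, ℝ)) : Matrix (Fin 2) (Fin 2) ℝ)

lemma IsConjIntegral.mul_toSL2R {G : Subgroup SL(2, ℤ)} {P : SL(2, ℝ)} (hP : IsConjIntegral G P)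
    (M : SL(2, ℤ)) : IsConjIntegral G (P * toSL2R M) := by
  intro A hA
  have hconj : (P * toSL2R M)⁻¹ * toSL2R A * (P * toSL2R M) =
      toSL2R M⁻¹ * (P⁻¹ * toSL2R A * P) * toSL2R M := by
    rw [map_inv]; group
  rw [hconj]
  exact ((isIntegerMatrix_toSL2R _).mul (hP A hA)).mul (isIntegerMatrix_toSL2R M)

lemma exists_vecMul_toSL2R_eq_of_smul {v : Fin 2 → ℝ} (hv : v ≠ 0) {c : ℝ} (hc : c ≠ 0)
    (hcv : ∀ j, ∃ k : ℤ, c * v j = k) :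
    ∃ γ : SL(2, ℤ), ∃ t > 0, v ᵥ* (toSL2R γ : Matrix (Fin 2) (Fin 2) ℝ) = ![0, t] := by
  wlog hc_pos : 0 < c generalizing c
  · refine this (neg_ne_zero.2 hc) (fun j => ?_) (by linarith [hc.lt_or_gt.resolve_right hc_pos])
    obtain ⟨k, hk⟩ := hcv j
    exact ⟨-k, by push_cast; linarith⟩
  choose k hk using hcv
  have hk_ne : k 0 ≠ 0 ∨ k 1 ≠ 0 := by
    by_contra! h0
    refine hv (funext fun j => (mul_eq_zero.1 ?_).resolve_left hc)
    fin_cases j <;> simp [hk, h0]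
  obtain ⟨g, u₀, u₁, hg, hu, hk₀, hk₁⟩ := Int.exists_gcd_one' (Int.gcd_pos_iff.2 hk_ne)
  obtain ⟨γ, -, hγ⟩ := bottom_row_surj (R := ℤ)
    (show ![u₀, u₁] ∈ {cd | IsCoprime (cd 0) (cd 1)} from Int.isCoprime_iff_gcd_eq_one.2 hu)
  have hγ₀ : γ 1 0 = u₀ := congrFun hγ 0
  have hγ₁ : γ 1 1 = u₁ := congrFun hγ 1
  have hv₀ : c * v 0 = g * u₀ := by rw [hk, hk₀]; push_cast; ring
  have hv₁ : c * v 1 = g * u₁ := by rw [hk, hk₁]; push_cast; ring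
  have hdetR : (γ 0 0 * u₁ - γ 0 1 * u₀ : ℝ) = 1 := by
    rw [← hγ₀, ← hγ₁]; exact_mod_cast det_fin_two_eq_one γ
  -- `v = (g / c) • u` and `u ᵥ* γ⁻¹ = ![0, 1]`, as `u` is the bottom row of `γ`
  refine ⟨γ⁻¹, g / c, by positivity, ?_⟩
  ext j
  fin_cases j <;>
    simp [adjugate_fin_two, vecMul, dotProduct, Fin.sum_univ_two, hγ₀, hγ₁]
  · refine (mul_eq_zero.1 ?_).resolve_left hc
    linear_combination (u₁ : ℝ) * hv₀ - (u₀ : ℝ) * hv₁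
  · field_simp
    linear_combination (γ 0 0 : ℝ) * hv₁ - (γ 0 1 : ℝ) * hv₀ + (g : ℝ) * hdetR

lemma exists_vecMul_toSL2R_eq {v : Fin 2 → ℝ} (hv : v ≠ 0) (hint : ∀ i j, ∃ k : ℤ, v i * v j = k) :
    ∃ γ : SL(2, ℤ), ∃ t > 0, v ᵥ* (toSL2R γ : Matrix (Fin 2) (Fin 2) ℝ) = ![0, t] := by
  obtain ⟨i, hi⟩ := Function.ne_iff.1 hv
  exact exists_vecMul_toSL2R_eq_of_smul hv hi (hint i)

noncomputable def upperTri (t q : ℝ) (ht : t ≠ 0) : SL(2, ℝ) :=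
  ⟨!![t⁻¹, q; 0, t], by simp [det_fin_two_of, ht]⟩

@[simp]
lemma coe_upperTri (t q : ℝ) (ht : t ≠ 0) :
    (upperTri t q ht : Matrix (Fin 2) (Fin 2) ℝ) = !![t⁻¹, q; 0, t] :=
  rfl

lemma eq_upperTri_of_row_one_eq {X : SL(2, ℝ)} {t : ℝ} (ht : t ≠ 0)
    (hX : (X : Matrix (Fin 2) (Fin 2) ℝ) 1 = ![0, t]) : X = upperTri t (X 0 1) ht := by
  have h₀ : X 1 0 = 0 := congrFun hX 0
  have h₁ : X 1 1 = t := congrFun hX 1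
  have hdet := det_fin_two_eq_one X
  rw [h₀, h₁] at hdet
  ext i j
  fin_cases i <;> fin_cases j <;> simp [upperTri, h₀, h₁]
  field_simp; linarith

lemma coe_conj_T (P : SL(2, ℝ)) :
    ((P⁻¹ * toSL2R T * P : SL(2, ℝ)) : Matrix (Fin 2) (Fin 2) ℝ) =
      !![1 + P 1 0 * P 1 1, P 1 1 ^ 2; -P 1 0 ^ 2, 1 - P 1 0 * P 1 1] := by
  have hdet := det_fin_two_eq_one P
  ext i j
  fin_cases i <;> fin_cases j <;>
    simp [adjugate_fin_two, mul_apply, vecMul, dotProduct, Fin.sum_univ_two] <;>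
    first | ring1 | linear_combination hdet

lemma IsConjIntegral.exists_mk_eq_upperTri {G : Subgroup SL(2, ℤ)} (hT : T ∈ G) {P : SL(2, ℝ)}
    (hP : IsConjIntegral G P) : ∃ t q : ℝ, ∃ ht : 0 < t,
      (QuotientGroup.mk P : SL(2, ℝ) ⧸ SL2ZinR) = QuotientGroup.mk (upperTri t q ht.ne') ∧
        IsConjIntegral G (upperTri t q ht.ne') := by
  have hrow : (P : Matrix (Fin 2) (Fin 2) ℝ) 1 ≠ 0 := fun h => by
    simpa [h] using det_fin_two_eq_one P
  have hint : ∀ i j, ∃ k : ℤ, P 1 i * P 1 j = k := by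
    have h := hP T hT
    rw [coe_conj_T] at h
    obtain ⟨a, ha⟩ := h 0 0
    obtain ⟨b, hb⟩ := h 0 1
    obtain ⟨c, hc⟩ := h 1 0
    simp only [of_apply, cons_val', cons_val_zero, cons_val_one, cons_val_fin_one] at ha hb hc
    intro i j
    fin_cases i <;> fin_cases j
    · exact ⟨-c, by push_cast; linarith⟩
    · exact ⟨a - 1, by push_cast; linarith⟩
    · exact ⟨a - 1, by push_cast; linarith⟩
    · exact ⟨b, by simpa [sq] using hb⟩
  obtain ⟨γ, t, ht, hγ⟩ := exists_vecMul_toSL2R_eq hrow hint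
  have hQ := eq_upperTri_of_row_one_eq (X := P * toSL2R γ) ht.ne' hγ
  refine ⟨t, _, ht, ?_, hQ ▸ hP.mul_toSL2R γ⟩
  rw [← hQ]
  exact (QuotientGroup.mk_mul_of_mem P (MonoidHom.mem_range.2 ⟨γ, rfl⟩)).symm

lemma coe_upperTri_conj (t q : ℝ) (ht : t ≠ 0) (A : SL(2, ℤ)) :
    (((upperTri t q ht)⁻¹ * toSL2R A * upperTri t q ht : SL(2, ℝ)) :
      Matrix (Fin 2) (Fin 2) ℝ) =
      !![A 0 0 - A 1 0 * (q / t), A 0 1 * t ^ 2 + (A 0 0 - A 1 1) * (q * t) - A 1 0 * q ^ 2;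
        A 1 0 / t ^ 2, A 1 1 + A 1 0 * (q / t)] := by
  ext i j
  fin_cases i <;> fin_cases j <;>
    simp [adjugate_fin_two, mul_apply, vecMul, dotProduct, Fin.sum_univ_two] <;>
    field_simp <;> ring

lemma coe_upperTri_inv_mul_upperTri (t q t' q' : ℝ) (ht : t ≠ 0) (ht' : t' ≠ 0) :
    (((upperTri t q ht)⁻¹ * upperTri t' q' ht' : SL(2, ℝ)) : Matrix (Fin 2) (Fin 2) ℝ) =
      !![t / t', t * q' - q * t'; 0, t' / t] := by
  ext i j
  fin_cases i <;> fin_cases j <;>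
    simp [adjugate_fin_two, mul_apply, Fin.sum_univ_two] <;> ring

lemma mk_upperTri_eq_mk_upperTri_iff {t t' q q' : ℝ} (ht : 0 < t) (ht' : 0 < t') :
    (QuotientGroup.mk (upperTri t q ht.ne') : SL(2, ℝ) ⧸ SL2ZinR) =
        QuotientGroup.mk (upperTri t' q' ht'.ne') ↔ t = t' ∧ ∃ n : ℤ, (q' - q) * t = n := by
  rw [QuotientGroup.eq]
  constructor
  · intro h
    have hint := isIntegerMatrix_of_mem_SL2ZinR h
    rw [coe_upperTri_inv_mul_upperTri] at hint
    obtain ⟨a, ha⟩ := hint 0 0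
    obtain ⟨b, hb⟩ := hint 0 1
    obtain ⟨d, hd⟩ := hint 1 1
    simp only [of_apply, cons_val', cons_val_zero, cons_val_one, cons_val_fin_one] at ha hb hd
    have had : (a * d : ℝ) = 1 := by rw [← ha, ← hd]; field_simp
    have ha_pos : (0 : ℝ) < a := by rw [← ha]; positivity
    have ha_one : a = 1 :=
      Int.eq_one_of_mul_eq_one_right (by exact_mod_cast ha_pos.le) (by exact_mod_cast had)
    obtain rfl : t = t' := by
      rw [ha_one, Int.cast_one, div_eq_one_iff_eq ht'.ne'] at ha
      exact ha
    exact ⟨rfl, b, by linarith⟩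
  · rintro ⟨rfl, n, hn⟩
    refine ⟨T ^ n, Subtype.ext ?_⟩
    rw [coe_toSL2R, coe_T_zpow, coe_upperTri_inv_mul_upperTri, div_self ht.ne']
    ext i j
    fin_cases i <;> fin_cases j <;> simp
    linear_combination -hn

lemma T_mem_Gamma0 (N : ℕ) : T ∈ Gamma0 N :=
  Gamma0_mem.2 (by simp [T])

lemma Gamma0_eight_dvd {A : SL(2, ℤ)} (hA : A ∈ Gamma0 8) : 8 ∣ A 1 0 ∧ 8 ∣ A 0 0 - A 1 1 := by
  have hc : ((A 1 0 : ℤ) : ZMod 8) = 0 := Gamma0_mem.1 hA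
  have had : ((A 0 0 : ℤ) : ZMod 8) * A 1 1 = 1 := by
    have := congrArg (Int.cast : ℤ → ZMod 8) (det_fin_two_eq_one A)
    push_cast at this
    rwa [hc, mul_zero, sub_zero] at this
  -- every unit of `ZMod 8` is its own inverse
  have had' : ((A 1 1 : ℤ) : ZMod 8) = A 0 0 :=
    ((by decide : ∀ a d : ZMod 8, a * d = 1 → d = a) _ _ had)
  exact ⟨(ZMod.intCast_zmod_eq_zero_iff_dvd _ 8).1 hc,
    (ZMod.intCast_eq_intCast_iff_dvd_sub _ _ 8).1 had'⟩

noncomputable def cosetRep (e : ℕ+) (x : ℤ) : SL(2, ℝ) :=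
  upperTri √e (x * √e / 8) (Real.sqrt_ne_zero'.2 (by positivity))

lemma isConjIntegral_cosetRep {e : ℕ+} {x : ℤ} (he : (e : ℤ) ∣ 8) (hx : 8 ∣ x ^ 2 * e) :
    IsConjIntegral (Gamma0 8) (cosetRep e x) := by
  intro A hA
  obtain ⟨⟨c, hc⟩, m, hm⟩ := Gamma0_eight_dvd hA
  obtain ⟨f, hf⟩ := he
  obtain ⟨y, hy⟩ := hx
  have hsq : √(e : ℝ) ^ 2 = e := Real.sq_sqrt (by positivity)
  have hne : √(e : ℝ) ≠ 0 := Real.sqrt_ne_zero'.2 (by positivity)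
  have hcR : (A 1 0 : ℝ) = 8 * c := by exact_mod_cast hc
  have hmR : (A 0 0 - A 1 1 : ℝ) = 8 * m := by exact_mod_cast hm
  have hfR : (8 : ℝ) = e * f := by exact_mod_cast hf
  have hyR : (x ^ 2 * e : ℝ) = 8 * y := by exact_mod_cast hy
  have hq_div : x * √(e : ℝ) / 8 / √e = x / 8 := by field_simp
  have hq_mul : x * √(e : ℝ) / 8 * √e = x * e / 8 := by linear_combination (x / 8 : ℝ) * hsq
  have hq_sq : (x * √(e : ℝ) / 8) ^ 2 = x ^ 2 * e / 64 := by
    linear_combination (x ^ 2 / 64 : ℝ) * hsq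
  rw [cosetRep, coe_upperTri_conj, hq_div, hq_mul, hq_sq, hsq]
  intro i j
  fin_cases i <;> fin_cases j <;> simp only [of_apply, cons_val', cons_val_zero, cons_val_one,
    empty_val', cons_val_fin_one, Fin.zero_eta, Fin.mk_one]
  · exact ⟨A 0 0 - c * x, by push_cast; linear_combination (-(x : ℝ) / 8) * hcR⟩
  · refine ⟨A 0 1 * e + m * x * e - c * y, ?_⟩
    push_cast
    linear_combination (x * e / 8 : ℝ) * hmR - (x ^ 2 * e / 64 : ℝ) * hcR - (c / 8 : ℝ) * hyR
  · refine ⟨c * f, ?_⟩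
    push_cast
    rw [div_eq_iff (by positivity)]
    linear_combination hcR + (c : ℝ) * hfR
  · exact ⟨A 1 1 + c * x, by push_cast; linear_combination (x / 8 : ℝ) * hcR⟩

lemma IsConjIntegral.exists_cosetRep_eq_upperTri {t q : ℝ} (ht : 0 < t)
    (h : IsConjIntegral (Gamma0 8) (upperTri t q ht.ne')) :
    ∃ e : ℕ+, ∃ x : ℤ, (e : ℤ) ∣ 8 ∧ 8 ∣ x ^ 2 * e ∧ upperTri t q ht.ne' = cosetRep e x := by
  have hT := h T (T_mem_Gamma0 8)
  let L : SL(2, ℤ) := ⟨!![1, 0; 8, 1], by simp [det_fin_two_of]⟩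
  have hL := h L (Gamma0_mem.2 (by simp [L]; rfl))
  rw [coe_upperTri_conj] at hT hL
  obtain ⟨k, hk⟩ := hT 0 1
  obtain ⟨a, ha⟩ := hL 0 0
  obtain ⟨b, hb⟩ := hL 0 1
  obtain ⟨f, hf⟩ := hL 1 0
  simp only [T, L, of_apply, cons_val', cons_val_zero, cons_val_one, cons_val_fin_one, Int.cast_zero,
    Int.cast_one, Int.cast_ofNat, zero_mul, one_mul, zero_div, sub_zero, sub_self, add_zero, zero_sub]
    at hk ha hb hf
  have hk_pos : 0 < k := by exact_mod_cast (hk ▸ pow_pos ht 2 : (0 : ℝ) < k)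
  lift k to ℕ using hk_pos.le
  rw [Int.cast_natCast] at hk
  have hx : (1 - a : ℝ) * t = 8 * q := by
    rw [← ha]; field_simp; ring
  have hsqrt : √(k : ℝ) = t := by
    rw [← hk]; exact Real.sqrt_sq ht.le
  refine ⟨⟨k, by exact_mod_cast hk_pos⟩, 1 - a, ⟨f, ?_⟩, ⟨-b, ?_⟩, ?_⟩
  · have : (8 : ℝ) = k * f := by rw [← hf, ← hk]; field_simp
    exact_mod_cast this
  · have : ((1 - a) ^ 2 * k : ℝ) = 8 * -b := by
      rw [← hb, ← hk]; linear_combination ((1 - a) * t + 8 * q : ℝ) * hx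
    exact_mod_cast this
  · unfold cosetRep
    congr 1
    · rw [PNat.mk_coe, hsqrt]
    · rw [PNat.mk_coe, hsqrt]
      push_cast
      linear_combination -hx / 8

lemma mk_cosetRep_eq_mk_cosetRep_iff {e e' : ℕ+} {x x' : ℤ} :
    (QuotientGroup.mk (cosetRep e x) : SL(2, ℝ) ⧸ SL2ZinR) = QuotientGroup.mk (cosetRep e' x') ↔
      e = e' ∧ 8 ∣ (x' - x) * e := by
  have hsq : ∀ e : ℕ+, √(e : ℝ) ^ 2 = e := fun e => Real.sq_sqrt (by positivity)
  rw [cosetRep, cosetRep, mk_upperTri_eq_mk_upperTri_iff (Real.sqrt_pos.2 (by positivity))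
    (Real.sqrt_pos.2 (by positivity))]
  constructor
  · rintro ⟨he, n, hn⟩
    obtain rfl : e = e' := by
      exact_mod_cast (Real.sqrt_inj (by positivity) (by positivity)).1 he
    refine ⟨rfl, n, ?_⟩
    have : ((x' - x) * e : ℝ) = 8 * n := by
      rw [← hn]; linear_combination (x - x' : ℝ) * hsq e
    exact_mod_cast this
  · rintro ⟨rfl, n, hn⟩
    refine ⟨rfl, n, ?_⟩
    have : ((x' - x) * e : ℝ) = 8 * n := by exact_mod_cast hn
    linear_combination (x' - x : ℝ) / 8 * hsq e + this / 8

def cosetReps : Finset (ℕ+ × ℤ) := {(1, 0), (1, 4), (2, 0), (2, 2), (4, 0), (8, 0)}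

lemma exists_mem_cosetReps {e : ℕ+} {x : ℤ} (he : (e : ℤ) ∣ 8) (hx : 8 ∣ x ^ 2 * e) :
    ∃ x', (e, x') ∈ cosetReps ∧ 8 ∣ (x - x') * e := by
  have key : ∀ n ∈ Nat.divisors 8, ∀ y : ZMod 8, y ^ 2 * n = 0 →
      ∃ p ∈ cosetReps, (p.1 : ℕ) = n ∧ (y - p.2) * n = 0 := by
    decide
  have hdiv : (e : ℕ) ∈ Nat.divisors 8 := Nat.mem_divisors.2 ⟨by exact_mod_cast he, by norm_num⟩
  have hx8 : (x : ZMod 8) ^ 2 * (e : ℕ) = 0 := by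
    simpa using (ZMod.intCast_zmod_eq_zero_iff_dvd _ 8).2 hx
  obtain ⟨⟨e', x'⟩, hmem, he', hx'⟩ := key _ hdiv _ hx8
  obtain rfl : e' = e := PNat.coe_inj.1 he'
  refine ⟨x', hmem, (ZMod.intCast_zmod_eq_zero_iff_dvd _ 8).1 ?_⟩
  simpa using hx'

lemma goodCosets_Gamma0_eight :
    goodCosets (Gamma0 8) =
      (fun p : ℕ+ × ℤ => (QuotientGroup.mk (cosetRep p.1 p.2) : SL(2, ℝ) ⧸ SL2ZinR)) '' cosetReps := by
  ext z
  constructor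
  · rintro ⟨P, rfl, hP : IsConjIntegral _ P⟩
    obtain ⟨t, q, ht, hPQ, hQ⟩ := hP.exists_mk_eq_upperTri (T_mem_Gamma0 8)
    obtain ⟨e, x, he, hx, hQ_eq⟩ := hQ.exists_cosetRep_eq_upperTri ht
    obtain ⟨x', hmem, hxx'⟩ := exists_mem_cosetReps he hx
    refine ⟨(e, x'), hmem, ?_⟩
    rw [hPQ, hQ_eq]
    exact mk_cosetRep_eq_mk_cosetRep_iff.2 ⟨rfl, hxx'⟩
  · rintro ⟨⟨e, x⟩, hmem, rfl⟩
    have hreps : ∀ p ∈ cosetReps, (p.1 : ℤ) ∣ 8 ∧ 8 ∣ p.2 ^ 2 * p.1 := by decide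
    obtain ⟨he, hx⟩ := hreps _ hmem
    exact ⟨_, rfl, isConjIntegral_cosetRep he hx⟩

lemma injOn_mk_cosetRep :
    Set.InjOn (fun p : ℕ+ × ℤ => (QuotientGroup.mk (cosetRep p.1 p.2) : SL(2, ℝ) ⧸ SL2ZinR))
      cosetReps := by
  rintro ⟨e, x⟩ hp ⟨e', x'⟩ hp' h
  obtain ⟨rfl, hxx'⟩ := mk_cosetRep_eq_mk_cosetRep_iff.1 h
  have hreps : ∀ p ∈ cosetReps, ∀ p' ∈ cosetReps,
      p.1 = p'.1 → 8 ∣ (p'.2 - p.2) * p.1 → p = p' := by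
    decide
  exact hreps _ hp _ hp' rfl hxx'

/-- `N(Γ₀(8)) = 6`. -/
theorem stmt_18 : (goodCosets (Gamma0 8)).ncard = 6 := by
  rw [goodCosets_Gamma0_eight, injOn_mk_cosetRep.ncard_image, Set.ncard_coe_finset]
  rfl
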